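/- The polynomial r_{k,i}(p) = i + Σ_{j=1}^{i-1}(i+j)k^{j-1}p^j − i k^i p^i satisfies r_{k,i}(0) = i > 0 and r_{k,i}(1) < 0 for all k ≥ 2, i ≥ 2; hence it has a root in (0,1). -/

import Mathlib

open Finset Set

/-- `r_{k,i}(p) = i + Σ_{j=1}^{i-1}(i+j)k^{j-1}p^j − i k^i p^i`. -/
noncomputable def rPoly (k i : ℕ) (p : ℝ) : ℝ :=
  i + (∑ j ∈ Finset.Icc 1 (i - 1), ((i : ℝ) + j) * k ^ (j - 1) * p ^ j)
    - i * (k : ℝ) ^ i * p ^ i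

/-!
`r_{k,i}` is continuous with `r_{k,i}(0) = i > 0`, so by the intermediate value theorem it suffices
that `r_{k,i}(1) < 0`. At `p = 1` every coefficient `i + j` is at most `2i`, and the geometric sum
`Σ_{j<i-1} k^j` is below `k^{i-1}`, so for `k ≥ 2`
`i + Σ (i+j) k^{j-1} < 2i k^{i-1} ≤ i k^i`.
-/

lemma Nat.sum_Icc_pow_sub_one_lt {k : ℕ} (hk : 2 ≤ k) (n : ℕ) :
    ∑ j ∈ Icc 1 n, k ^ (j - 1) < k ^ n := by
  rw [← Finset.sum_image (g := (· - 1)) (f := (k ^ ·))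
    (fun a ha b hb h ↦ by simp only [coe_Icc, Set.mem_Icc] at ha hb; dsimp only at h; omega)]
  exact Nat.geomSum_lt hk fun m hm ↦ by
    obtain ⟨j, hj, rfl⟩ := Finset.mem_image.mp hm
    simp only [Finset.mem_Icc] at hj
    omega

lemma Nat.add_sum_Icc_mul_pow_lt {k i : ℕ} (hk : 2 ≤ k) (hi : 0 < i) :
    i + ∑ j ∈ Icc 1 (i - 1), (i + j) * k ^ (j - 1) < i * k ^ i := by
  set S := ∑ j ∈ Icc 1 (i - 1), k ^ (j - 1)
  have hcoeff : ∑ j ∈ Icc 1 (i - 1), (i + j) * k ^ (j - 1) ≤ 2 * i * S := by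
    rw [Finset.mul_sum]
    refine Finset.sum_le_sum fun j hj ↦ Nat.mul_le_mul_right _ ?_
    simp only [Finset.mem_Icc] at hj
    omega
  have hgeom : S + 1 ≤ k ^ (i - 1) := Nat.sum_Icc_pow_sub_one_lt hk _
  have hpow : 2 * k ^ (i - 1) ≤ k ^ i := by
    rw [show k ^ i = k * k ^ (i - 1) by rw [← pow_succ']; congr 1; omega]
    exact Nat.mul_le_mul_right _ hk
  calc i + ∑ j ∈ Icc 1 (i - 1), (i + j) * k ^ (j - 1)
      < 2 * i * (S + 1) := by nlinarith
    _ ≤ 2 * i * k ^ (i - 1) := Nat.mul_le_mul_left _ hgeom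
    _ ≤ i * k ^ i := by rw [mul_comm 2, mul_assoc]; exact Nat.mul_le_mul_left _ hpow

lemma rPoly_zero (k : ℕ) {i : ℕ} (hi : i ≠ 0) : rPoly k i 0 = i := by
  rw [rPoly, Finset.sum_eq_zero fun j hj ↦ by
    rw [zero_pow (by rw [Finset.mem_Icc] at hj; omega), mul_zero]]
  simp [hi]

lemma rPoly_one (k i : ℕ) :
    rPoly k i 1 = ((i + ∑ j ∈ Icc 1 (i - 1), (i + j) * k ^ (j - 1) : ℕ) : ℝ) - (i * k ^ i : ℕ) := by
  simp [rPoly]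

lemma rPoly_one_neg {k i : ℕ} (hk : 2 ≤ k) (hi : 0 < i) : rPoly k i 1 < 0 := by
  rw [rPoly_one, sub_neg, Nat.cast_lt]
  exact Nat.add_sum_Icc_mul_pow_lt hk hi

lemma continuous_rPoly (k i : ℕ) : Continuous (rPoly k i) := by
  unfold rPoly
  fun_prop

/-- `r_{k,i}(0) = i > 0` and `r_{k,i}(1) < 0` for all `k ≥ 2`, `i ≥ 2`; hence
`r_{k,i}` has a root in `(0,1)`. -/
theorem rPoly_root_exists (k i : ℕ) (hk : 2 ≤ k) (hi : 2 ≤ i) :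
    rPoly k i 0 = i ∧ (0:ℝ) < i ∧ rPoly k i 1 < 0 ∧
    ∃ p ∈ Ioo (0:ℝ) 1, rPoly k i p = 0 := by
  have hi₀ : 0 < i := by omega
  have h0 : rPoly k i 0 = i := rPoly_zero k hi₀.ne'
  have hpos : (0:ℝ) < i := Nat.cast_pos.mpr hi₀
  have h1 : rPoly k i 1 < 0 := rPoly_one_neg hk hi₀
  refine ⟨h0, hpos, h1, ?_⟩
  exact intermediate_value_Ioo' zero_le_one (continuous_rPoly k i).continuousOn
    ⟨h1, h0 ▸ hpos⟩
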